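/- arXiv:1407.7266 — 2 statements merged into one kernel-verified Lean document; each statement's English description precedes it below -/
import Mathlib

section
/- Let q1, q2 : ℝ × ℝ → ℂ be twice continuously differentiable. For λ ∈ ℂ define the 3×3 complex matrix-valued functions U(λ) = i·λ·J + Q and V(λ) = 2i·λ²·J + 2λ·Q + i·J·(Q² − Qₓ), where Qₓ denotes the entrywise partial derivative of Q with respect to x. Then the zero-curvature identity ∂U(λ)/∂t − ∂V(λ)/∂x + U(λ)·V(λ) − V(λ)·U(λ) = 0 holds for all λ ∈ ℂ and all (x,t) ∈ ℝ² if and only if (q1, q2) solves the Manakov system. -/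
open Complex Matrix

noncomputable section

/-- The Manakov system for `q1 q2 : ℝ × ℝ → ℂ`. -/
def Manakov (q1 q2 : ℝ × ℝ → ℂ) : Prop :=
  (∀ x t : ℝ,
    Complex.I * deriv (fun t' => q1 (x, t')) t
      + deriv (fun x' => deriv (fun x'' => q1 (x'', t)) x') x
      + 2 * ((‖q1 (x, t)‖ : ℂ) ^ 2 + (‖q2 (x, t)‖ : ℂ) ^ 2) * q1 (x, t) = 0) ∧
  (∀ x t : ℝ,
    Complex.I * deriv (fun t' => q2 (x, t')) t
      + deriv (fun x' => deriv (fun x'' => q2 (x'', t)) x') x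
      + 2 * ((‖q1 (x, t)‖ : ℂ) ^ 2 + (‖q2 (x, t)‖ : ℂ) ^ 2) * q2 (x, t) = 0)

/-- The constant matrix `J = diag(−1, 1, 1)`. -/
def Jmat : Matrix (Fin 3) (Fin 3) ℂ := Matrix.diagonal ![-1, 1, 1]

/-- The potential matrix `Q` with rows `(0, q1, q2)`, `(−q1*, 0, 0)`, `(−q2*, 0, 0)`. -/
def Qmat (q1 q2 : ℝ × ℝ → ℂ) (p : ℝ × ℝ) : Matrix (Fin 3) (Fin 3) ℂ :=
  !![0, q1 p, q2 p;
     -(starRingEnd ℂ) (q1 p), 0, 0;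
     -(starRingEnd ℂ) (q2 p), 0, 0]

/-- `Qₓ`: the entrywise partial derivative of `Q` with respect to `x`. -/
def Qxmat (q1 q2 : ℝ × ℝ → ℂ) (p : ℝ × ℝ) : Matrix (Fin 3) (Fin 3) ℂ :=
  Matrix.of fun i j => deriv (fun x' => Qmat q1 q2 (x', p.2) i j) p.1

/-- `U(λ) = i·λ·J + Q`. -/
def Umat (q1 q2 : ℝ × ℝ → ℂ) (lam : ℂ) (p : ℝ × ℝ) : Matrix (Fin 3) (Fin 3) ℂ :=
  (Complex.I * lam) • Jmat + Qmat q1 q2 p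

/-- `V(λ) = 2i·λ²·J + 2λ·Q + i·J·(Q² − Qₓ)`. -/
def Vmat (q1 q2 : ℝ × ℝ → ℂ) (lam : ℂ) (p : ℝ × ℝ) : Matrix (Fin 3) (Fin 3) ℂ :=
  (2 * Complex.I * lam ^ 2) • Jmat + (2 * lam) • Qmat q1 q2 p
    + Complex.I • (Jmat * (Qmat q1 q2 p * Qmat q1 q2 p - Qxmat q1 q2 p))

/-!
Since `J² = 1` and `J` anticommutes with every matrix of the shape of `Q` (in particular with
`Q` and `Qₓ`), all terms of `∂ₜU − ∂ₓV + [U, V]` containing `λ` cancel, leaving the matrix NLS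
expression `Qₜ + iJ(Qₓₓ − 2Q³)`. For this shape `Q³ = −(|q1|² + |q2|²) Q`, so that expression
again has the shape of `Q`, its first row carrying `−i` times the two Manakov expressions.
-/

open ComplexConjugate

section EntrywiseDeriv

variable {𝕜 𝔸 m n l : Type*} [NontriviallyNormedField 𝕜] [NormedRing 𝔸] [NormedAlgebra 𝕜 𝔸]

/-- Matrices carry no global norm in Mathlib, so derivatives of matrix-valued maps are taken
entry by entry. -/
def HasEntrywiseDerivAt (A : 𝕜 → Matrix m n 𝔸) (A' : Matrix m n 𝔸) (x : 𝕜) : Prop :=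
  ∀ i j, HasDerivAt (fun y => A y i j) (A' i j) x

variable {A : 𝕜 → Matrix m n 𝔸} {A' : Matrix m n 𝔸} {x : 𝕜}

theorem HasEntrywiseDerivAt.deriv_apply (hA : HasEntrywiseDerivAt A A' x) (i : m) (j : n) :
    deriv (fun y => A y i j) x = A' i j :=
  (hA i j).deriv

theorem hasEntrywiseDerivAt_const (C : Matrix m n 𝔸) (x : 𝕜) :
    HasEntrywiseDerivAt (fun _ => C) 0 x :=
  fun i j => hasDerivAt_const x (C i j)

theorem HasEntrywiseDerivAt.add {B : 𝕜 → Matrix m n 𝔸} {B' : Matrix m n 𝔸}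
    (hA : HasEntrywiseDerivAt A A' x) (hB : HasEntrywiseDerivAt B B' x) :
    HasEntrywiseDerivAt (fun y => A y + B y) (A' + B') x :=
  fun i j => (hA i j).add (hB i j)

theorem HasEntrywiseDerivAt.sub {B : 𝕜 → Matrix m n 𝔸} {B' : Matrix m n 𝔸}
    (hA : HasEntrywiseDerivAt A A' x) (hB : HasEntrywiseDerivAt B B' x) :
    HasEntrywiseDerivAt (fun y => A y - B y) (A' - B') x :=
  fun i j => (hA i j).sub (hB i j)

theorem HasEntrywiseDerivAt.const_smul (c : 𝔸) (hA : HasEntrywiseDerivAt A A' x) :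
    HasEntrywiseDerivAt (fun y => c • A y) (c • A') x :=
  fun i j => (hA i j).const_mul c

theorem HasEntrywiseDerivAt.mul [Fintype n] {B : 𝕜 → Matrix n l 𝔸} {B' : Matrix n l 𝔸}
    (hA : HasEntrywiseDerivAt A A' x) (hB : HasEntrywiseDerivAt B B' x) :
    HasEntrywiseDerivAt (fun y => A y * B y) (A' * B x + A x * B') x := by
  intro i j
  simp only [Matrix.add_apply, Matrix.mul_apply, ← Finset.sum_add_distrib]
  exact HasDerivAt.fun_sum fun k _ => (hA i k).mul (hB k j)

end EntrywiseDeriv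

/-- `2λQₓ + iJ(QₓQ + QQₓ − Qₓₓ)` is `∂ₓV(λ)`. -/
theorem zeroCurvature_eq_matrixNLS {A : Type*} [Ring A] [Algebra ℂ A] {J Q Qt Qx Qxx : A}
    (hJ : J * J = 1) (hQ : Q * J = -(J * Q)) (hQx : Qx * J = -(J * Qx)) (lam : ℂ) :
    Qt - ((2 * lam) • Qx + I • (J * (Qx * Q + Q * Qx - Qxx)))
      + (((I * lam) • J + Q) * ((2 * I * lam ^ 2) • J + (2 * lam) • Q + I • (J * (Q * Q - Qx)))
        - ((2 * I * lam ^ 2) • J + (2 * lam) • Q + I • (J * (Q * Q - Qx))) * ((I * lam) • J + Q))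
      = Qt + I • (J * (Qxx - (2 : ℂ) • (Q * Q * Q))) := by
  have hQ' (X : A) : Q * (J * X) = -(J * (Q * X)) := by rw [← mul_assoc, hQ, neg_mul, mul_assoc]
  have hJ' (X : A) : J * (J * X) = X := by rw [← mul_assoc, hJ, one_mul]
  simp only [mul_add, add_mul, mul_sub, sub_mul, smul_mul_assoc, mul_smul_comm, mul_assoc,
    smul_add, smul_sub, hQ, hQx, hQ', hJ', hJ, mul_neg, smul_neg]
  match_scalars <;> first | ring1 | linear_combination (-2 * lam) * I_sq

def offDiag (a b : ℂ) : Matrix (Fin 3) (Fin 3) ℂ :=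
  !![0, a, b; -conj a, 0, 0; -conj b, 0, 0]

theorem offDiag_eq_zero_iff {a b : ℂ} : offDiag a b = 0 ↔ a = 0 ∧ b = 0 := by
  constructor
  · intro h
    exact ⟨by simpa [offDiag] using congrFun₂ h 0 1, by simpa [offDiag] using congrFun₂ h 0 2⟩
  · rintro ⟨rfl, rfl⟩
    ext i j
    fin_cases i <;> fin_cases j <;> simp [offDiag]

theorem Jmat_mul_self : Jmat * Jmat = 1 := by
  rw [Jmat, Matrix.diagonal_mul_diagonal, ← Matrix.diagonal_one]
  congr 1
  ext i
  fin_cases i <;> simp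

theorem offDiag_mul_Jmat (a b : ℂ) : offDiag a b * Jmat = -(Jmat * offDiag a b) := by
  ext i j
  fin_cases i <;> fin_cases j <;> simp [offDiag, Jmat]

theorem offDiag_mul_self_mul_self (a b : ℂ) :
    offDiag a b * offDiag a b * offDiag a b
      = offDiag (-((‖a‖ : ℂ) ^ 2 + (‖b‖ : ℂ) ^ 2) * a) (-((‖a‖ : ℂ) ^ 2 + (‖b‖ : ℂ) ^ 2) * b) := by
  ext i j
  simp only [← mul_conj']
  fin_cases i <;> fin_cases j <;>
    simp [offDiag, Matrix.mul_apply, Fin.sum_univ_three, -mul_eq_mul_left_iff,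
      -mul_eq_mul_right_iff] <;> ring

theorem offDiag_add (a b c d : ℂ) : offDiag a b + offDiag c d = offDiag (a + c) (b + d) := by
  ext i j
  fin_cases i <;> fin_cases j <;> simp [offDiag] <;> ring

theorem offDiag_sub (a b c d : ℂ) : offDiag a b - offDiag c d = offDiag (a - c) (b - d) := by
  ext i j
  fin_cases i <;> fin_cases j <;> simp [offDiag] <;> ring

theorem offDiag_add_I_smul_Jmat_mul (a b c d : ℂ) :
    offDiag a b + I • (Jmat * offDiag c d) = offDiag (a - I * c) (b - I * d) := by
  ext i j
  fin_cases i <;> fin_cases j <;> simp [offDiag, Jmat] <;> ring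

theorem HasDerivAt.hasEntrywiseDerivAt_offDiag {f g : ℝ → ℂ} {f' g' : ℂ} {x : ℝ}
    (hf : HasDerivAt f f' x) (hg : HasDerivAt g g' x) :
    HasEntrywiseDerivAt (fun y => offDiag (f y) (g y)) (offDiag f' g') x := by
  intro i j
  fin_cases i <;> fin_cases j <;> simp [offDiag] <;>
    first | exact hasDerivAt_const x 0 | exact hf | exact hg | exact hf.star.neg | exact hg.star.neg

section PartialDeriv

variable {E : Type*} [NormedAddCommGroup E] [NormedSpace ℝ E] {f : ℝ × ℝ → E}

def derivX (f : ℝ × ℝ → E) (x t : ℝ) : E := deriv (fun x' => f (x', t)) x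

def derivT (f : ℝ × ℝ → E) (x t : ℝ) : E := deriv (fun t' => f (x, t')) t

def derivXX (f : ℝ × ℝ → E) (x t : ℝ) : E := deriv (fun x' => derivX f x' t) x

theorem Differentiable.hasDerivAt_derivX (hf : Differentiable ℝ f) (x t : ℝ) :
    HasDerivAt (fun x' => f (x', t)) (derivX f x t) x :=
  ((hf.comp (differentiable_id.prodMk (differentiable_const t))) x).hasDerivAt

theorem Differentiable.hasDerivAt_derivT (hf : Differentiable ℝ f) (x t : ℝ) :
    HasDerivAt (fun t' => f (x, t')) (derivT f x t) t :=
  ((hf.comp ((differentiable_const x).prodMk differentiable_id)) t).hasDerivAt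

theorem ContDiff.hasDerivAt_derivXX (hf : ContDiff ℝ 2 f) (x t : ℝ) :
    HasDerivAt (fun x' => derivX f x' t) (derivXX f x t) x :=
  ((hf.comp (contDiff_id.prodMk contDiff_const)).differentiable_deriv_two x).hasDerivAt

end PartialDeriv

section Manakov

variable {q1 q2 : ℝ × ℝ → ℂ}

theorem Qmat_eq_offDiag (p : ℝ × ℝ) : Qmat q1 q2 p = offDiag (q1 p) (q2 p) := rfl

theorem hasEntrywiseDerivAt_Qmat_x (h1 : Differentiable ℝ q1) (h2 : Differentiable ℝ q2)
    (x t : ℝ) :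
    HasEntrywiseDerivAt (fun x' => Qmat q1 q2 (x', t))
      (offDiag (derivX q1 x t) (derivX q2 x t)) x :=
  (h1.hasDerivAt_derivX x t).hasEntrywiseDerivAt_offDiag (h2.hasDerivAt_derivX x t)

theorem Qxmat_eq_offDiag (h1 : Differentiable ℝ q1) (h2 : Differentiable ℝ q2) (x t : ℝ) :
    Qxmat q1 q2 (x, t) = offDiag (derivX q1 x t) (derivX q2 x t) := by
  ext i j
  exact (hasEntrywiseDerivAt_Qmat_x h1 h2 x t).deriv_apply i j

theorem hasEntrywiseDerivAt_Qxmat_x (h1 : ContDiff ℝ 2 q1) (h2 : ContDiff ℝ 2 q2) (x t : ℝ) :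
    HasEntrywiseDerivAt (fun x' => Qxmat q1 q2 (x', t))
      (offDiag (derivXX q1 x t) (derivXX q2 x t)) x := by
  simp_rw [Qxmat_eq_offDiag (h1.differentiable two_ne_zero) (h2.differentiable two_ne_zero)]
  exact (h1.hasDerivAt_derivXX x t).hasEntrywiseDerivAt_offDiag (h2.hasDerivAt_derivXX x t)

theorem hasEntrywiseDerivAt_Umat_t (h1 : Differentiable ℝ q1) (h2 : Differentiable ℝ q2)
    (lam : ℂ) (x t : ℝ) :
    HasEntrywiseDerivAt (fun t' => Umat q1 q2 lam (x, t'))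
      (offDiag (derivT q1 x t) (derivT q2 x t)) t := by
  have h := (hasEntrywiseDerivAt_const ((I * lam) • Jmat) t).add
    ((h1.hasDerivAt_derivT x t).hasEntrywiseDerivAt_offDiag (h2.hasDerivAt_derivT x t))
  rwa [zero_add] at h

theorem hasEntrywiseDerivAt_Vmat_x (h1 : ContDiff ℝ 2 q1) (h2 : ContDiff ℝ 2 q2) (lam : ℂ)
    (x t : ℝ) :
    HasEntrywiseDerivAt (fun x' => Vmat q1 q2 lam (x', t))
      ((2 * lam) • offDiag (derivX q1 x t) (derivX q2 x t)
        + I • (Jmat * (offDiag (derivX q1 x t) (derivX q2 x t) * Qmat q1 q2 (x, t)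
          + Qmat q1 q2 (x, t) * offDiag (derivX q1 x t) (derivX q2 x t)
          - offDiag (derivXX q1 x t) (derivXX q2 x t)))) x := by
  have hQ := hasEntrywiseDerivAt_Qmat_x (h1.differentiable two_ne_zero)
    (h2.differentiable two_ne_zero) x t
  have h := ((hasEntrywiseDerivAt_const ((2 * I * lam ^ 2) • Jmat) x).add
    (hQ.const_smul (2 * lam))).add (((hasEntrywiseDerivAt_const Jmat x).mul
      ((hQ.mul hQ).sub (hasEntrywiseDerivAt_Qxmat_x h1 h2 x t))).const_smul I)
  rwa [zero_add, zero_mul, zero_add] at h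

def manakovResidual (q1 q2 q : ℝ × ℝ → ℂ) (x t : ℝ) : ℂ :=
  I * derivT q x t + derivXX q x t + 2 * ((‖q1 (x, t)‖ : ℂ) ^ 2 + (‖q2 (x, t)‖ : ℂ) ^ 2) * q (x, t)

theorem manakov_iff_forall_residual_eq_zero :
    Manakov q1 q2 ↔ ∀ x t, manakovResidual q1 q2 q1 x t = 0 ∧ manakovResidual q1 q2 q2 x t = 0 :=
  ⟨fun h x t => ⟨h.1 x t, h.2 x t⟩, fun h => ⟨fun x t => (h x t).1, fun x t => (h x t).2⟩⟩

theorem zeroCurvature_entry_eq_offDiag (h1 : ContDiff ℝ 2 q1) (h2 : ContDiff ℝ 2 q2) (lam : ℂ)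
    (x t : ℝ) (i j : Fin 3) :
    deriv (fun t' => Umat q1 q2 lam (x, t') i j) t
        - deriv (fun x' => Vmat q1 q2 lam (x', t) i j) x
        + (Umat q1 q2 lam (x, t) * Vmat q1 q2 lam (x, t)
            - Vmat q1 q2 lam (x, t) * Umat q1 q2 lam (x, t)) i j
      = offDiag (-I * manakovResidual q1 q2 q1 x t) (-I * manakovResidual q1 q2 q2 x t) i j := by
  have hd1 := h1.differentiable two_ne_zero
  have hd2 := h2.differentiable two_ne_zero
  rw [(hasEntrywiseDerivAt_Umat_t hd1 hd2 lam x t).deriv_apply,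
    (hasEntrywiseDerivAt_Vmat_x h1 h2 lam x t).deriv_apply, ← Matrix.sub_apply, ← Matrix.add_apply,
    Umat, Vmat, Qxmat_eq_offDiag hd1 hd2, Qmat_eq_offDiag,
    zeroCurvature_eq_matrixNLS Jmat_mul_self (offDiag_mul_Jmat _ _) (offDiag_mul_Jmat _ _),
    offDiag_mul_self_mul_self, two_smul, offDiag_add, offDiag_sub, offDiag_add_I_smul_Jmat_mul]
  congr 1 <;> unfold manakovResidual
  · linear_combination derivT q1 x t * I_sq
  · linear_combination derivT q2 x t * I_sq

end Manakov

/-- the zero-curvature identity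
`∂U(λ)/∂t − ∂V(λ)/∂x + U(λ)·V(λ) − V(λ)·U(λ) = 0` holds (entrywise) for all `λ ∈ ℂ` and all
`(x,t) ∈ ℝ²` iff `(q1, q2)` solves the Manakov system. -/
theorem zero_curvature_iff_manakov (q1 q2 : ℝ × ℝ → ℂ)
    (h1 : ContDiff ℝ 2 q1) (h2 : ContDiff ℝ 2 q2) :
    (∀ lam : ℂ, ∀ x t : ℝ, ∀ i j : Fin 3,
      deriv (fun t' => Umat q1 q2 lam (x, t') i j) t
        - deriv (fun x' => Vmat q1 q2 lam (x', t) i j) x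
        + (Umat q1 q2 lam (x, t) * Vmat q1 q2 lam (x, t)
            - Vmat q1 q2 lam (x, t) * Umat q1 q2 lam (x, t)) i j = 0)
      ↔ Manakov q1 q2 := by
  have matrix_eq_zero_iff (M : Matrix (Fin 3) (Fin 3) ℂ) : (∀ i j, M i j = 0) ↔ M = 0 :=
    Matrix.ext_iff
  simp only [zeroCurvature_entry_eq_offDiag h1 h2, matrix_eq_zero_iff, offDiag_eq_zero_iff,
    mul_eq_zero, neg_eq_zero, I_ne_zero, false_or, forall_const]
  exact manakov_iff_forall_residual_eq_zero.symm
end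
end

section
/- Let c1, c2 be real numbers with s := √(c1² + c2²) > 0, and set b = 2(c1² + c2²). Define L1(x,t) = x + 2i·t·s, L2(x,t) = 2i·t·s² − x·s + 1, F1 = 4·c1·s·L1·L2, G1 = 4·c2·s·L1·L2, and H1(x,t) = 8t²s⁴ + 2x²s² − 2xs + 1. Then the pair of functions q1^[1](x,t) = e^{ibt}·(c1 + F1(x,t)/H1(x,t)) and q2^[1](x,t) = e^{ibt}·(c2 + G1(x,t)/H1(x,t)) solves the Manakov system on all of ℝ². Moreover q1^[1](x,t)·c2 = q2^[1](x,t)·c1 for all (x,t). -/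
open Complex

noncomputable section

/-- `s = √(c1² + c2²)`. -/
def sval (c1 c2 : ℝ) : ℝ := Real.sqrt (c1 ^ 2 + c2 ^ 2)

/-- `L1(x,t) = x + 2i·t·s`. -/
def L1 (c1 c2 : ℝ) (x t : ℝ) : ℂ := (x : ℂ) + 2 * Complex.I * (t : ℂ) * (sval c1 c2 : ℂ)

/-- `L2(x,t) = 2i·t·s² − x·s + 1`. -/
def L2 (c1 c2 : ℝ) (x t : ℝ) : ℂ :=
  2 * Complex.I * (t : ℂ) * (sval c1 c2 : ℂ) ^ 2 - (x : ℂ) * (sval c1 c2 : ℂ) + 1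

/-- `F1 = 4·c1·s·L1·L2`. -/
def F1 (c1 c2 : ℝ) (x t : ℝ) : ℂ :=
  4 * (c1 : ℂ) * (sval c1 c2 : ℂ) * L1 c1 c2 x t * L2 c1 c2 x t

/-- `G1 = 4·c2·s·L1·L2`. -/
def G1 (c1 c2 : ℝ) (x t : ℝ) : ℂ :=
  4 * (c2 : ℂ) * (sval c1 c2 : ℂ) * L1 c1 c2 x t * L2 c1 c2 x t

/-- `H1(x,t) = 8t²s⁴ + 2x²s² − 2xs + 1`. -/
def H1 (c1 c2 : ℝ) (x t : ℝ) : ℝ :=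
  8 * t ^ 2 * (sval c1 c2) ^ 4 + 2 * x ^ 2 * (sval c1 c2) ^ 2 - 2 * x * (sval c1 c2) + 1

/-- The first component `q1^[1](x,t) = e^{ibt}·(c1 + F1/H1)` with `b = 2(c1² + c2²)`. -/
def q1rw (c1 c2 : ℝ) (p : ℝ × ℝ) : ℂ :=
  Complex.exp (Complex.I * ((2 * (c1 ^ 2 + c2 ^ 2) : ℝ) : ℂ) * (p.2 : ℂ))
    * ((c1 : ℂ) + F1 c1 c2 p.1 p.2 / (H1 c1 c2 p.1 p.2 : ℂ))

/-- The second component `q2^[1](x,t) = e^{ibt}·(c2 + G1/H1)` with `b = 2(c1² + c2²)`. -/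
def q2rw (c1 c2 : ℝ) (p : ℝ × ℝ) : ℂ :=
  Complex.exp (Complex.I * ((2 * (c1 ^ 2 + c2 ^ 2) : ℝ) : ℂ) * (p.2 : ℂ))
    * ((c2 : ℂ) + G1 c1 c2 p.1 p.2 / (H1 c1 c2 p.1 p.2 : ℂ))

/-!
Both components are real multiples `c₁ Q`, `c₂ Q` of one function `Q`, and such a pair solves the
Manakov system as soon as `Q` solves the scalar focusing equation
`i Q_t + Q_xx + 2 (c₁² + c₂²) |Q|² Q = 0`. Here `Q (x, t) = P (s x, s² t)` with
`s² = c₁² + c₂²`, and this rescaling carries solutions of `i P_T + P_XX + 2 |P|² P = 0` to solutions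
of the equation with coefficient `s²`. Finally `P` is, up to sign and a translation, the Peregrine
soliton, which solves the unit equation by a direct rational computation.
-/

open ComplexConjugate

def IsNLSSolution (κ : ℝ) (Q : ℝ × ℝ → ℂ) : Prop :=
  ∀ x t : ℝ,
    I * deriv (fun t' => Q (x, t')) t + deriv (fun x' => deriv (fun x'' => Q (x'', t)) x') x
      + 2 * κ * (‖Q (x, t)‖ : ℂ) ^ 2 * Q (x, t) = 0

theorem IsNLSSolution.manakov_const_mul {Q : ℝ × ℝ → ℂ} {a b : ℂ}
    (hQ : IsNLSSolution (‖a‖ ^ 2 + ‖b‖ ^ 2) Q) :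
    Manakov (fun p => a * Q p) (fun p => b * Q p) := by
  have key : ∀ c : ℂ, ∀ x t : ℝ,
      I * deriv (fun t' => c * Q (x, t')) t
        + deriv (fun x' => deriv (fun x'' => c * Q (x'', t)) x') x
        + 2 * ((‖a * Q (x, t)‖ : ℂ) ^ 2 + (‖b * Q (x, t)‖ : ℂ) ^ 2) * (c * Q (x, t)) = 0 := by
    intro c x t
    have h := hQ x t
    simp only [deriv_const_mul_field', norm_mul]
    push_cast at h ⊢
    linear_combination c * h
  exact ⟨key a, key b⟩

theorem IsNLSSolution.comp_smul {κ : ℝ} {Q : ℝ × ℝ → ℂ} (hQ : IsNLSSolution κ Q) (s : ℝ) :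
    IsNLSSolution (s ^ 2 * κ) (fun p => Q (s * p.1, s ^ 2 * p.2)) := by
  intro x t
  have ht : deriv (fun t' => Q (s * x, s ^ 2 * t')) t
      = (s : ℂ) ^ 2 * deriv (fun T => Q (s * x, T)) (s ^ 2 * t) := by
    rw [deriv_comp_mul_left (s ^ 2) (fun T => Q (s * x, T)), real_smul, ofReal_pow]
  have hx (g : ℝ → ℂ) (x' : ℝ) : deriv (fun x'' => g (s * x'')) x' = s * deriv g (s * x') := by
    rw [deriv_comp_mul_left s, real_smul]
  have hxx : deriv (fun x' => deriv (fun x'' => Q (s * x'', s ^ 2 * t)) x') x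
      = (s : ℂ) ^ 2 * deriv (fun X' => deriv (fun X => Q (X, s ^ 2 * t)) X') (s * x) := by
    simp only [hx (fun X => Q (X, s ^ 2 * t)), deriv_const_mul_field',
      hx (deriv fun X => Q (X, s ^ 2 * t))]
    ring
  simp only [ht, hxx]
  push_cast
  linear_combination (s : ℂ) ^ 2 * hQ (s * x) (s ^ 2 * t)

theorem hasDerivAt_ofReal_quadratic (a b c : ℂ) (y : ℝ) :
    HasDerivAt (fun y : ℝ => a + b * y + c * (y : ℂ) ^ 2) (b + 2 * c * y) y := by
  have h := (((hasDerivAt_id' (y : ℂ)).const_mul b).const_add a).add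
    (((hasDerivAt_id' (y : ℂ)).fun_pow 2).const_mul c)
  exact (h.congr_deriv (by ring)).comp_ofReal

theorem deriv_deriv_div {𝕜 𝕜' : Type*} [NontriviallyNormedField 𝕜] [NontriviallyNormedField 𝕜']
    [NormedAlgebra 𝕜 𝕜'] {f g f' g' : 𝕜 → 𝕜'} {f'' g'' : 𝕜'} {x : 𝕜}
    (hf : ∀ y, HasDerivAt f (f' y) y) (hg : ∀ y, HasDerivAt g (g' y) y) (hg0 : ∀ y, g y ≠ 0)
    (hf' : HasDerivAt f' f'' x) (hg' : HasDerivAt g' g'' x) :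
    deriv (deriv fun y => f y / g y) x
      = ((f'' * g x - f x * g'') * g x - 2 * g' x * (f' x * g x - f x * g' x)) / g x ^ 3 := by
  have hderiv : deriv (fun y => f y / g y) = fun y => (f' y * g y - f y * g' y) / g y ^ 2 :=
    funext fun y => ((hf y).fun_div (hg y) (hg0 y)).deriv
  rw [hderiv, (((hf'.fun_mul (hg x)).fun_sub ((hf x).fun_mul hg')).fun_div ((hg x).fun_pow 2)
    (pow_ne_zero 2 (hg0 x))).deriv]
  field_simp [hg0 x]
  ring

/- `peregrine` is minus the Peregrine soliton `e^{2iT} (1 - 4 (1 + 4iT) / (1 + 4X² + 16T²))`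
translated by `1/2` in `X`. -/
def peregrineNum (X T : ℝ) : ℂ := 1 + 2 * X - 2 * X ^ 2 - 8 * T ^ 2 + 8 * I * T

def peregrineDen (X T : ℝ) : ℝ := 8 * T ^ 2 + 2 * X ^ 2 - 2 * X + 1

def peregrine (p : ℝ × ℝ) : ℂ :=
  exp (2 * I * p.2) * (peregrineNum p.1 p.2 / peregrineDen p.1 p.2)

theorem peregrineDen_pos (X T : ℝ) : 0 < peregrineDen X T := by
  unfold peregrineDen
  nlinarith [sq_nonneg T, sq_nonneg X, sq_nonneg (X - 1)]

theorem peregrineDen_ne_zero (X T : ℝ) : (peregrineDen X T : ℂ) ≠ 0 :=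
  ofReal_ne_zero.mpr (peregrineDen_pos X T).ne'

theorem hasDerivAt_peregrineNum_fst (X T : ℝ) :
    HasDerivAt (peregrineNum · T) (2 - 4 * X) X := by
  convert hasDerivAt_ofReal_quadratic (1 - 8 * T ^ 2 + 8 * I * T) 2 (-2) X using 1
  · ext X; simp only [peregrineNum]; ring
  · ring

theorem hasDerivAt_peregrineNum_snd (X T : ℝ) :
    HasDerivAt (peregrineNum X ·) (8 * I - 16 * T) T := by
  convert hasDerivAt_ofReal_quadratic (1 + 2 * X - 2 * X ^ 2) (8 * I) (-8) T using 1
  · ext T; simp only [peregrineNum]; ring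
  · ring

theorem hasDerivAt_peregrineDen_fst (X T : ℝ) :
    HasDerivAt (fun X => (peregrineDen X T : ℂ)) (4 * X - 2) X := by
  convert hasDerivAt_ofReal_quadratic (8 * T ^ 2 + 1) (-2) 2 X using 1
  · ext X; push_cast [peregrineDen]; ring
  · ring

theorem hasDerivAt_peregrineDen_snd (X T : ℝ) :
    HasDerivAt (fun T => (peregrineDen X T : ℂ)) (16 * T) T := by
  convert hasDerivAt_ofReal_quadratic (2 * X ^ 2 - 2 * X + 1) 0 8 T using 1
  · ext T; push_cast [peregrineDen]; ring
  · ring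

theorem sq_norm_peregrine (X T : ℝ) :
    (‖peregrine (X, T)‖ : ℂ) ^ 2
      = peregrineNum X T * conj (peregrineNum X T) / (peregrineDen X T : ℂ) ^ 2 := by
  have hexp : ‖exp (2 * I * T)‖ = 1 := by
    rw [show 2 * I * T = ((2 * T : ℝ) : ℂ) * I by push_cast; ring, norm_exp_ofReal_mul_I]
  rw [mul_conj, normSq_eq_norm_sq, peregrine, norm_mul, hexp, one_mul, norm_div, norm_real,
    Real.norm_of_nonneg (peregrineDen_pos X T).le]
  push_cast
  ring

theorem isNLSSolution_peregrine : IsNLSSolution 1 peregrine := by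
  intro X T
  have ht : deriv (fun T' => peregrine (X, T')) T
      = exp (2 * I * T) * (2 * I * (peregrineNum X T / peregrineDen X T)
        + ((8 * I - 16 * T) * peregrineDen X T - peregrineNum X T * (16 * T))
          / (peregrineDen X T : ℂ) ^ 2) := by
    have hexp : HasDerivAt (fun T : ℝ => exp (2 * I * T)) (exp (2 * I * T) * (2 * I)) T := by
      simpa using ((hasDerivAt_id (T : ℂ)).const_mul (2 * I)).cexp |>.comp_ofReal
    simp only [peregrine]
    rw [(hexp.fun_mul ((hasDerivAt_peregrineNum_snd X T).fun_div (hasDerivAt_peregrineDen_snd X T)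
      (peregrineDen_ne_zero X T))).deriv]
    ring
  have hxx : deriv (fun X' => deriv (fun X'' => peregrine (X'', T)) X') X
      = exp (2 * I * T) * (((-4 * peregrineDen X T - peregrineNum X T * 4) * peregrineDen X T
        - 2 * (4 * X - 2) * ((2 - 4 * X) * peregrineDen X T - peregrineNum X T * (4 * X - 2)))
          / (peregrineDen X T : ℂ) ^ 3) := by
    simp only [peregrine, deriv_const_mul_field']
    rw [deriv_deriv_div (hasDerivAt_peregrineNum_fst · T) (hasDerivAt_peregrineDen_fst · T)
      (peregrineDen_ne_zero · T)
      (by simpa using ((hasDerivAt_id (X : ℂ)).const_mul 4).const_sub 2 |>.comp_ofReal)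
      (by simpa using ((hasDerivAt_id (X : ℂ)).const_mul 4).sub_const 2 |>.comp_ofReal)]
  have hconj : conj (peregrineNum X T) = 1 + 2 * X - 2 * X ^ 2 - 8 * T ^ 2 - 8 * I * T := by
    simp only [peregrineNum, map_add, map_sub, map_mul, map_pow, map_one, map_ofNat, conj_ofReal,
      conj_I]
    ring
  have hden := peregrineDen_ne_zero X T
  rw [ht, hxx, sq_norm_peregrine, hconj, peregrine]
  -- once `peregrineDen X T ^ 3` is cleared, this is a polynomial identity modulo `I ^ 2 = -1`
  field_simp
  rw [peregrineNum]
  push_cast [peregrineDen]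
  ring_nf
  simp only [I_sq, I_pow_three]
  ring_nf

theorem H1_eq_peregrineDen (c1 c2 x t : ℝ) :
    H1 c1 c2 x t = peregrineDen (sval c1 c2 * x) (sval c1 c2 ^ 2 * t) := by
  unfold H1 peregrineDen
  ring

theorem H1_add_mul_L1_mul_L2 (c1 c2 x t : ℝ) :
    H1 c1 c2 x t + 4 * sval c1 c2 * L1 c1 c2 x t * L2 c1 c2 x t
      = peregrineNum (sval c1 c2 * x) (sval c1 c2 ^ 2 * t) := by
  simp only [H1, L1, L2, peregrineNum]
  push_cast
  linear_combination 16 * (t : ℂ) ^ 2 * (sval c1 c2 : ℂ) ^ 4 * I_sq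

theorem exp_mul_add_mul_L1_mul_L2_div_H1 (c c1 c2 x t : ℝ) :
    exp (I * ((2 * (c1 ^ 2 + c2 ^ 2) : ℝ) : ℂ) * t)
        * (c + 4 * c * sval c1 c2 * L1 c1 c2 x t * L2 c1 c2 x t / H1 c1 c2 x t)
      = c * peregrine (sval c1 c2 * x, sval c1 c2 ^ 2 * t) := by
  have hs : sval c1 c2 ^ 2 = c1 ^ 2 + c2 ^ 2 := Real.sq_sqrt (by positivity)
  have hH : (H1 c1 c2 x t : ℂ) ≠ 0 := by
    rw [H1_eq_peregrineDen]; exact peregrineDen_ne_zero _ _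
  rw [peregrine, ← H1_add_mul_L1_mul_L2, ← H1_eq_peregrineDen, ← hs]
  field_simp
  push_cast
  ring_nf

theorem q1rw_eq (c1 c2 : ℝ) :
    q1rw c1 c2 = fun p => c1 * peregrine (sval c1 c2 * p.1, sval c1 c2 ^ 2 * p.2) :=
  funext fun p => exp_mul_add_mul_L1_mul_L2_div_H1 c1 c1 c2 p.1 p.2

theorem q2rw_eq (c1 c2 : ℝ) :
    q2rw c1 c2 = fun p => c2 * peregrine (sval c1 c2 * p.1, sval c1 c2 ^ 2 * p.2) :=
  funext fun p => exp_mul_add_mul_L1_mul_L2_div_H1 c2 c1 c2 p.1 p.2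

theorem first_order_rogue_wave_solves_manakov_general (c1 c2 : ℝ) :
    Manakov (q1rw c1 c2) (q2rw c1 c2) ∧
    ∀ p : ℝ × ℝ, q1rw c1 c2 p * (c2 : ℂ) = q2rw c1 c2 p * (c1 : ℂ) := by
  rw [q1rw_eq, q2rw_eq]
  refine ⟨IsNLSSolution.manakov_const_mul ?_, fun p => by ring⟩
  have hκ : ‖(c1 : ℂ)‖ ^ 2 + ‖(c2 : ℂ)‖ ^ 2 = sval c1 c2 ^ 2 * 1 := by
    rw [norm_real, norm_real, Real.norm_eq_abs, Real.norm_eq_abs, sq_abs, sq_abs, mul_one, sval,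
      Real.sq_sqrt (by positivity)]
  rw [hκ]
  exact isNLSSolution_peregrine.comp_smul _

/-- the pair `(q1^[1], q2^[1])` is the first-order vector rogue wave of the
Manakov system: it solves the Manakov system on all of `ℝ²` and satisfies
`q1^[1]·c2 = q2^[1]·c1`. -/
theorem first_order_rogue_wave_solves_manakov (c1 c2 : ℝ)
    (hs : Real.sqrt (c1 ^ 2 + c2 ^ 2) > 0) :
    Manakov (q1rw c1 c2) (q2rw c1 c2) ∧
    ∀ p : ℝ × ℝ, q1rw c1 c2 p * (c2 : ℂ) = q2rw c1 c2 p * (c1 : ℂ) :=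
  first_order_rogue_wave_solves_manakov_general c1 c2
end
end
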